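/- Let Γ be a bichromatic graph that is locally like W(F4), and let x and y be two vertices of Γ of the same type at distance 2 in Γ. Then every common neighbor of x and y is of the opposite type, any two distinct common neighbors of x and y are non-adjacent, and the number of common neighbors of x and y is 1, 2, or 3. -/

import Mathlib

/-!
In the local graph of a vertex `z`, the neighbours of the same type as `z` are the diagonal
vertices `y_{i,i}` of `W(B₃)`, which are pairwise adjacent; so the non-adjacent vertices `x`, `y`
have no common neighbour of their own type. Two adjacent common neighbours `z`, `z'` would then
have the same type, and in the local graph at `z` the vertex `z'` is some `y_{k,k}`, whose only
off-diagonal neighbours `y_{i,j}`, `y_{j,i}` are adjacent, contradicting `x ≁ y`. Finally, at `x`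
the common neighbours form an independent set of off-diagonal vertices, on which
`y_{i,j} ↦ {i, j}` is injective, so there are at most three of them.
-/

/-- The Weyl graph of type `Bₙ`: vertices `y_{i,j}`, `1 ≤ i,j ≤ n`; distinct vertices
`y_{i,j}`, `y_{k,l}` are adjacent iff `{i,j} ∩ {k,l} = ∅` or `(k,l) = (j,i)`. -/
def WB (n : ℕ) : SimpleGraph (Fin n × Fin n) where
  Adj p q :=
    p ≠ q ∧ (({p.1, p.2} : Set (Fin n)) ∩ {q.1, q.2} = ∅ ∨ (q.1 = p.2 ∧ q.2 = p.1))
  symm := by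
    constructor
    rintro ⟨a, b⟩ ⟨c, d⟩ ⟨hne, h⟩
    refine ⟨hne.symm, ?_⟩
    rcases h with h | ⟨h1, h2⟩
    · left; rw [Set.inter_comm] at h; exact h
    · right; exact ⟨h2.symm, h1.symm⟩
  loopless := by constructor; rintro ⟨a, b⟩ ⟨hne, _⟩; exact hne rfl

/-- The coloring of `W(Bₙ)`: `y_{i,i}` is short (`true`), `y_{i,j}` with `i ≠ j` is long. -/
def WBcolor (n : ℕ) (p : Fin n × Fin n) : Bool := decide (p.1 = p.2)

/-- The coloring of `W(Cₙ)`: obtained from `W(Bₙ)` by exchanging short and long vertices. -/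
def WCcolor (n : ℕ) (p : Fin n × Fin n) : Bool := !(WBcolor n p)

/-- Isomorphism of bichromatic graphs: a graph isomorphism preserving vertex types
(`true` = short, `false` = long). -/
def BIso {V : Type*} {W : Type*} (G : SimpleGraph V) (cG : V → Bool)
    (H : SimpleGraph W) (cH : W → Bool) : Prop :=
  ∃ e : G ≃g H, ∀ v : V, cH (e v) = cG v

/-- A bichromatic graph is locally like `W(F₄)` if the local graph at every short vertex
is isomorphic to `W(B₃)` and the local graph at every long vertex is isomorphic to `W(C₃)`. -/
def LocallyLikeWF4 {V : Type*} (G : SimpleGraph V) (c : V → Bool) : Prop :=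
  ∀ v : V,
    (c v = true → BIso (G.induce (G.neighborSet v)) (fun x => c x.1) (WB 3) (WBcolor 3)) ∧
    (c v = false → BIso (G.induce (G.neighborSet v)) (fun x => c x.1) (WB 3) (WCcolor 3))

lemma WB_adj_iff {n : ℕ} {p q : Fin n × Fin n} :
    (WB n).Adj p q ↔ p ≠ q ∧ ((p.1 ≠ q.1 ∧ p.1 ≠ q.2 ∧ p.2 ≠ q.1 ∧ p.2 ≠ q.2) ∨
      (q.1 = p.2 ∧ q.2 = p.1)) := by
  refine and_congr_right fun _ => or_congr_left ?_
  simp only [Set.eq_empty_iff_forall_notMem, Set.mem_inter_iff, Set.mem_insert_iff,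
    Set.mem_singleton_iff]
  aesop

lemma WB_adj_of_fst_eq_snd {n : ℕ} {p q : Fin n × Fin n} (hp : p.1 = p.2) (hq : q.1 = q.2)
    (hpq : p ≠ q) : (WB n).Adj p q := by
  obtain ⟨i, j⟩ := p
  obtain ⟨k, l⟩ := q
  simp only at hp hq
  subst hp hq
  refine WB_adj_iff.mpr ⟨hpq, Or.inl ?_⟩
  have hik : i ≠ k := fun h => hpq (h ▸ rfl)
  exact ⟨hik, hik, hik, hik⟩

/-- The off-diagonal neighbours of `y_{k,k}` in `W(B₃)` are `y_{i,j}` and `y_{j,i}` with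
`{i, j, k} = {1, 2, 3}`. -/
lemma WB_three_adj_of_adj_of_fst_eq_snd : ∀ d p q : Fin 3 × Fin 3, d.1 = d.2 → p.1 ≠ p.2 →
    q.1 ≠ q.2 → (WB 3).Adj d p → (WB 3).Adj d q → p ≠ q → (WB 3).Adj p q := by
  simp only [WB_adj_iff]; decide

lemma WB_three_adj_of_pair_eq : ∀ p q : Fin 3 × Fin 3, p.1 ≠ p.2 → p ≠ q →
    ({p.1, p.2} : Finset (Fin 3)) = {q.1, q.2} → (WB 3).Adj p q := by
  simp only [WB_adj_iff]; decide

lemma WB_three_ncard_le_of_isIndepSet {T : Set (Fin 3 × Fin 3)} (hoff : ∀ p ∈ T, p.1 ≠ p.2)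
    (hT : (WB 3).IsIndepSet T) : T.ncard ≤ 3 := by
  let pairs : Finset (Finset (Fin 3)) := Finset.univ.powersetCard 2
  have hmaps : ∀ p ∈ T, ({p.1, p.2} : Finset (Fin 3)) ∈ (pairs : Set (Finset (Fin 3))) :=
    fun p hp => by simpa [pairs] using Finset.card_pair (hoff p hp)
  have hinj : Set.InjOn (fun p : Fin 3 × Fin 3 => ({p.1, p.2} : Finset (Fin 3))) T :=
    fun p hp q hq hpq => by_contra fun hne =>
      hT hp hq hne (WB_three_adj_of_pair_eq p q (hoff p hp) hne hpq)
  calc T.ncard ≤ (pairs : Set (Finset (Fin 3))).ncard :=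
        Set.ncard_le_ncard_of_injOn _ hmaps hinj
    _ = 3 := by rw [Set.ncard_coe_finset, Finset.card_powersetCard]; rfl

namespace LocallyLikeWF4

variable {V : Type*} {G : SimpleGraph V} {c : V → Bool}

lemma exists_iso (hloc : LocallyLikeWF4 G c) (z : V) :
    ∃ e : G.induce (G.neighborSet z) ≃g WB 3, ∀ v, (e v).1 = (e v).2 ↔ c v = c z := by
  cases hz : c z with
  | true =>
    obtain ⟨e, he⟩ := (hloc z).1 hz
    exact ⟨e, fun v => by simp [← he v, WBcolor]⟩
  | false =>
    obtain ⟨e, he⟩ := (hloc z).2 hz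
    exact ⟨e, fun v => by simp [← he v, WCcolor, WBcolor]⟩

lemma finite_neighborSet (hloc : LocallyLikeWF4 G c) (z : V) : (G.neighborSet z).Finite := by
  obtain ⟨e, -⟩ := hloc.exists_iso z
  exact Set.finite_coe_iff.mp (Finite.of_equiv _ e.toEquiv.symm)

lemma isClique_sameType (hloc : LocallyLikeWF4 G c) (z : V) :
    G.IsClique {v | G.Adj z v ∧ c v = c z} := by
  rintro u ⟨hu, hcu⟩ v ⟨hv, hcv⟩ huv
  obtain ⟨e, he⟩ := hloc.exists_iso z
  have hne : e ⟨u, hu⟩ ≠ e ⟨v, hv⟩ := fun h => huv (congrArg Subtype.val (e.injective h))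
  exact e.map_adj_iff.mp (WB_adj_of_fst_eq_snd ((he _).mpr hcu) ((he _).mpr hcv) hne)

lemma isClique_oppType_of_adj (hloc : LocallyLikeWF4 G c) {z z' : V} (hzz' : G.Adj z z')
    (hc : c z' = c z) : G.IsClique {v | G.Adj z v ∧ G.Adj z' v ∧ c v ≠ c z} := by
  rintro u ⟨hu, hu', hcu⟩ v ⟨hv, hv', hcv⟩ huv
  obtain ⟨e, he⟩ := hloc.exists_iso z
  have hne : e ⟨u, hu⟩ ≠ e ⟨v, hv⟩ := fun h => huv (congrArg Subtype.val (e.injective h))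
  refine e.map_adj_iff.mp (WB_three_adj_of_adj_of_fst_eq_snd (e ⟨z', hzz'⟩) _ _
    ((he _).mpr hc) (fun h => hcu ((he _).mp h)) (fun h => hcv ((he _).mp h)) ?_ ?_ hne)
  · exact e.map_adj_iff.mpr hu'
  · exact e.map_adj_iff.mpr hv'

lemma ncard_le_three_of_isIndepSet (hloc : LocallyLikeWF4 G c) {x : V} {S : Set V}
    (hS : S ⊆ {v | G.Adj x v ∧ c v ≠ c x}) (hind : G.IsIndepSet S) : S.ncard ≤ 3 := by
  obtain ⟨e, he⟩ := hloc.exists_iso x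
  let f : Fin 3 × Fin 3 → V := fun p => e.symm p
  have hf_inj : f.Injective := Subtype.val_injective.comp e.symm.injective
  have hS_range : S ⊆ Set.range f := fun v hv =>
    ⟨e ⟨v, (hS hv).1⟩, by simp [f]⟩
  rw [← Set.ncard_preimage_of_injective_subset_range hf_inj hS_range]
  refine WB_three_ncard_le_of_isIndepSet (fun p hp hdiag => (hS hp).2 ?_) ?_
  · simpa using (he (e.symm p)).mp (by simpa using hdiag)
  · intro p hp q hq hpq hadj
    exact hind hp hq (hf_inj.ne hpq) (e.symm.map_adj_iff.mpr hadj)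

end LocallyLikeWF4

theorem common_neighbors_same_type_distance_two {V : Type} (G : SimpleGraph V) (c : V → Bool)
    (hloc : LocallyLikeWF4 G c) (x y : V)
    (htype : c x = c y) (hdist : G.dist x y = 2) :
    (∀ z ∈ G.commonNeighbors x y, c z ≠ c x) ∧
    (∀ z ∈ G.commonNeighbors x y, ∀ z' ∈ G.commonNeighbors x y, z ≠ z' → ¬ G.Adj z z') ∧
    (G.commonNeighbors x y).ncard ∈ ({1, 2, 3} : Set ℕ) := by
  have hedist : G.edist x y = 2 := by
    rw [← (SimpleGraph.Reachable.of_dist_ne_zero (by omega)).coe_dist_eq_edist, hdist]; rfl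
  obtain ⟨hne, hxy, hex⟩ := SimpleGraph.edist_eq_two_iff.mp hedist
  have hopp : ∀ z ∈ G.commonNeighbors x y, c z ≠ c x := by
    intro z hz hcz
    obtain ⟨hxz, hyz⟩ := G.mem_commonNeighbors.mp hz
    exact hxy (hloc.isClique_sameType z ⟨hxz.symm, hcz.symm⟩
      ⟨hyz.symm, htype.symm.trans hcz.symm⟩ hne)
  have hindep : G.IsIndepSet (G.commonNeighbors x y) := by
    intro z hz z' hz' hzz' hadj
    obtain ⟨hxz, hyz⟩ := G.mem_commonNeighbors.mp hz
    obtain ⟨hxz', hyz'⟩ := G.mem_commonNeighbors.mp hz'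
    have hc : c z' = c z :=
      (Bool.eq_not_iff.mpr (hopp z' hz')).trans (Bool.eq_not_iff.mpr (hopp z hz)).symm
    refine hxy (hloc.isClique_oppType_of_adj hadj hc ⟨hxz.symm, hxz'.symm, ?_⟩
      ⟨hyz.symm, hyz'.symm, ?_⟩ hne)
    · exact fun h => hopp z hz h.symm
    · exact fun h => hopp z hz (htype.trans h).symm
  have hsub : G.commonNeighbors x y ⊆ {v | G.Adj x v ∧ c v ≠ c x} :=
    fun z hz => ⟨(G.mem_commonNeighbors.mp hz).1, hopp z hz⟩
  have hpos : 0 < (G.commonNeighbors x y).ncard :=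
    (Set.ncard_pos ((hloc.finite_neighborSet x).subset fun z hz => (hsub hz).1)).mpr hex
  have hle := hloc.ncard_le_three_of_isIndepSet hsub hindep
  refine ⟨hopp, fun z hz z' hz' => hindep hz hz', ?_⟩
  simp only [Set.mem_insert_iff, Set.mem_singleton_iff]
  omega
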